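/- For every r < ω and every infinite cardinal μ, the partition relation ℶ_r(μ)^+ → (μ^+)^{r+1}_μ holds: every coloring of (r+1)-element subsets of a set of cardinality ℶ_r(μ)^+ with μ colors has a homogeneous set of cardinality μ^+. -/

import Mathlib

/-!
Induction on `r`, each step costing one exponential. Given a colouring `c` of the
`(n+1)`-sets of a set `α` of size `(2^κ)⁺` with `μ ≤ 2^κ` colours, call the map
`s ↦ c ({a} ∪ s)` on finite `s ⊆ X` the type of `a` over `X`. Over a set `X` of size `≤ κ`
there are at most `μ^κ ≤ 2^κ` types, so a set `B` of size `2^κ` can be closed under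
realising, inside `B \ X`, every type over every `X ⊆ B` of size `≤ κ` that is realised
outside `X`. Fix `a ∉ B` and pick `e ξ ∈ B` for `ξ < κ⁺` realising the type of `a` over
`{e η | η < ξ}`. Then the colour of an `(n+1)`-set of the `e ξ` depends only on its first
`n` elements, and a homogeneous set for this induced colouring of `n`-sets of `κ⁺` maps to
one for `c`.
-/

open Cardinal Set Order Function

def iterBeth (μ : Cardinal) : ℕ → Cardinal
  | 0 => μ
  | r + 1 => 2 ^ iterBeth μ r

universe v

section Recursion

variable {Ω β : Type*}

theorem injective_of_forall_notMem_image_Iio [LinearOrder Ω] {f : Ω → β}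
    (h : ∀ ξ, f ξ ∉ f '' Iio ξ) : Injective f := by
  intro ξ η hfe
  by_contra hne
  rcases lt_or_gt_of_ne hne with hlt | hlt
  · exact h η ⟨ξ, hlt, hfe⟩
  · exact h ξ ⟨η, hlt, hfe.symm⟩

variable [Preorder Ω] [WellFoundedLT Ω]

noncomputable def fixImage (G : Set β → β) : Ω → β :=
  wellFounded_lt.fix fun ξ f => G (range fun η : Iio ξ => f η η.2)

theorem fixImage_eq (G : Set β → β) (ξ : Ω) : fixImage G ξ = G (fixImage G '' Iio ξ) := by
  rw [fixImage, WellFounded.fix_eq, image_eq_range]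

end Recursion

namespace Cardinal

variable {κ θ : Cardinal.{v}}

theorem mk_Iio_toType_ord_succ_le (ξ : (succ κ).ord.ToType) : #(Iio ξ) ≤ κ :=
  lt_succ_iff.1 (by simpa using mk_Iio_lt ξ (by simp))

theorem exists_forall_lt_toType_ord_succ (hκ : ℵ₀ ≤ κ) {S : Set (succ κ).ord.ToType}
    (hS : #S ≤ κ) : ∃ ξ, ∀ η ∈ S, η < ξ :=
  not_isCofinal_iff.1 fun hcof => (Order.cof_le hcof).not_gt <| by
    rw [Ordinal.cof_toType, (isRegular_succ hκ).cof_ord]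
    exact hS.trans_lt (lt_succ κ)

theorem mk_iUnion_le_of_le {α ι : Type v} {f : ι → Set α} (hθ : ℵ₀ ≤ θ) (hι : #ι ≤ θ)
    (hf : ∀ i, #(f i) ≤ θ) : #(⋃ i, f i) ≤ θ :=
  mk_iUnion_le f |>.trans <| mul_le_of_le hθ hι (ciSup_le' hf)

theorem exists_closed_under {α : Type v} (hκ : ℵ₀ ≤ κ) (hκθ : κ < θ) (hθ : θ ^ κ ≤ θ)
    (G : Set α → Set α) (hG : ∀ X : Set α, #X ≤ κ → #(G X) ≤ θ) :
    ∃ B : Set α, #B ≤ θ ∧ ∀ X ⊆ B, #X ≤ κ → G X ⊆ B := by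
  have hθ₀ : ℵ₀ ≤ θ := hκ.trans hκθ.le
  let Φ : Set α → Set α := fun D => ⋃ X : {X : Set α // X ⊆ D ∧ #X ≤ κ}, G X
  have hΦ : ∀ D : Set α, #D ≤ θ → #(Φ D) ≤ θ := fun D hD =>
    mk_iUnion_le_of_le hθ₀
      ((mk_bounded_subset_le D κ).trans <| (power_le_power_right (max_le hD hθ₀)).trans hθ)
      fun X => hG X.1 X.2.2
  let stage : (succ κ).ord.ToType → Set α := fixImage fun S => Φ (⋃₀ S)
  have hstage : ∀ ξ, #(stage ξ) ≤ θ := by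
    intro ξ
    induction ξ using WellFoundedLT.induction with
    | ind ξ ih =>
      rw [show stage ξ = _ from fixImage_eq _ ξ, sUnion_image]
      refine hΦ _ (mk_biUnion_le _ _ |>.trans <| mul_le_of_le hθ₀ ?_ (ciSup_le' fun η => ih η η.2))
      exact (mk_Iio_toType_ord_succ_le ξ).trans hκθ.le
  refine ⟨⋃ ξ, stage ξ, mk_iUnion_le_of_le hθ₀ (by simpa using succ_le_of_lt hκθ) hstage, ?_⟩
  intro X hXB hX
  choose ξ hξ using fun x : X => mem_iUnion.1 (hXB x.2)
  -- `κ⁺` is regular, so the at most `κ` stages used to cover `X` lie below a single `ξ₀`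
  obtain ⟨ξ₀, hξ₀⟩ := exists_forall_lt_toType_ord_succ hκ (mk_range_le.trans hX)
  have hXξ₀ : X ⊆ ⋃₀ (stage '' Iio ξ₀) := fun x hx =>
    ⟨_, mem_image_of_mem _ (hξ₀ _ (mem_range_self ⟨x, hx⟩)), hξ ⟨x, hx⟩⟩
  calc G X ⊆ Φ (⋃₀ (stage '' Iio ξ₀)) := fun _ hx => mem_iUnion.2 ⟨⟨X, hXξ₀, hX⟩, hx⟩
    _ = stage ξ₀ := (fixImage_eq (fun S => Φ (⋃₀ S)) ξ₀).symm
    _ ⊆ ⋃ ξ, stage ξ := subset_iUnion stage ξ₀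

end Cardinal

section Types

variable {α ι : Type v} [DecidableEq α] (c : Finset α → ι)

def typeOver (X : Set α) (a : α) : Finset X → ι :=
  fun s => c (insert a (s.map (Embedding.subtype (· ∈ X))))

variable {c}

theorem apply_insert_eq_of_typeOver_eq {X : Set α} {a b : α}
    (h : typeOver c X a = typeOver c X b) {s : Finset α} (hs : ↑s ⊆ X) :
    c (insert a s) = c (insert b s) := by
  classical
  simpa [typeOver, Finset.subtype_map_of_mem hs] using congrFun h (s.subtype (· ∈ X))

variable (c)

theorem exists_typeOver_representatives (X : Set α) :
    ∃ W ⊆ Xᶜ, #W ≤ #ι ^ #(Finset X) ∧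
      ∀ a ∉ X, ∃ b ∈ W, typeOver c X b = typeOver c X a := by
  obtain ⟨W, hWX, hW⟩ := exists_subset_bijOn Xᶜ (typeOver c X)
  refine ⟨W, hWX, ?_, fun a ha => hW.surjOn (mem_image_of_mem _ ha)⟩
  rw [← mk_image_eq_of_injOn _ _ hW.injOn, power_def]
  exact mk_set_le _

theorem exists_typeOver_closed {κ : Cardinal.{v}} (hκ : ℵ₀ ≤ κ) (hι : #ι ≤ 2 ^ κ) :
    ∃ B : Set α, #B ≤ 2 ^ κ ∧
      ∀ X ⊆ B, #X ≤ κ → ∀ a ∉ X, ∃ b ∈ B \ X, typeOver c X b = typeOver c X a := by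
  choose W hWX hW hWa using exists_typeOver_representatives c
  have hpow : ((2 : Cardinal) ^ κ) ^ κ ≤ 2 ^ κ := by rw [← power_mul, mul_eq_self hκ]
  obtain ⟨B, hB, hBW⟩ := exists_closed_under hκ (cantor κ) hpow W fun X hX =>
    have hfin : #(Finset X) ≤ κ := (mk_le_of_surjective List.toFinset_surjective).trans <|
      (mk_list_le_max X).trans (max_le hκ hX)
    (hW X).trans <| (power_le_power_right hι).trans <|
      (power_le_power_left (power_ne_zero _ two_ne_zero) hfin).trans hpow
  refine ⟨B, hB, fun X hXB hX a ha => ?_⟩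
  obtain ⟨b, hbW, hb⟩ := hWa X a ha
  exact ⟨b, ⟨hBW X hXB hX hbW, hWX X hbW⟩, hb⟩

end Types

section Homogeneous

variable {α ι Ω : Type v}

def IsHomogeneous (c : Finset α → ι) (n : ℕ) (H : Set α) : Prop :=
  ∀ s t : Finset α, s.card = n → t.card = n → ↑s ⊆ H → ↑t ⊆ H → c s = c t

variable [DecidableEq α] [LinearOrder Ω]

def IsEndHomogeneous (c : Finset α → ι) (e : Ω → α) (d : Finset Ω → ι) : Prop :=
  ∀ (σ : Finset Ω) (ξ : Ω), (∀ η ∈ σ, η < ξ) → c (insert (e ξ) (σ.image e)) = d σ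

variable {c : Finset α → ι}

theorem IsEndHomogeneous.apply_image {e : Ω → α} {d : Finset Ω → ι}
    (hd : IsEndHomogeneous c e d) {σ : Finset Ω} (hσ : σ.Nonempty) :
    c (σ.image e) = d (σ.erase (σ.max' hσ)) := by
  conv_lhs => rw [← Finset.insert_erase (σ.max'_mem hσ), Finset.image_insert]
  exact hd _ _ fun η hη => σ.lt_max'_of_mem_erase_max' hσ hη

theorem IsEndHomogeneous.isHomogeneous_image {e : Ω → α} {d : Finset Ω → ι}
    (hd : IsEndHomogeneous c e d) (he : Injective e) {n : ℕ} {H : Set Ω}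
    (hH : IsHomogeneous d n H) : IsHomogeneous c (n + 1) (e '' H) := by
  have hreduce : ∀ s : Finset α, s.card = n + 1 → ↑s ⊆ e '' H →
      ∃ σ : Finset Ω, σ.card = n ∧ ↑σ ⊆ H ∧ c s = d σ := by
    intro s hs hsH
    obtain ⟨τ, hτH, rfl⟩ := Finset.subset_set_image_iff.1 hsH
    rw [Finset.card_image_of_injective _ he] at hs
    have hτ : τ.Nonempty := Finset.card_pos.1 (by omega)
    refine ⟨τ.erase (τ.max' hτ), ?_, ?_, hd.apply_image hτ⟩
    · rw [Finset.card_erase_of_mem (τ.max'_mem hτ), hs, Nat.add_sub_cancel]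
    · exact (Finset.coe_subset.2 (Finset.erase_subset _ _)).trans hτH
  intro s t hs ht hsH htH
  obtain ⟨σ, hσ, hσH, hcs⟩ := hreduce s hs hsH
  obtain ⟨τ, hτ, hτH, hct⟩ := hreduce t ht htH
  rw [hcs, hct]
  exact hH σ τ hσ hτ hσH hτH

variable [WellFoundedLT Ω] (c) {κ : Cardinal.{v}}

theorem exists_injective_isEndHomogeneous_of_closed (hΩ : ∀ ξ : Ω, #(Iio ξ) ≤ κ) {B : Set α}
    (hB : ∀ X ⊆ B, #X ≤ κ → ∀ a ∉ X, ∃ b ∈ B \ X, typeOver c X b = typeOver c X a)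
    {a : α} (ha : a ∉ B) :
    ∃ e : Ω → α, Injective e ∧ IsEndHomogeneous c e fun σ => c (insert a (σ.image e)) := by
  have : Nonempty α := ⟨a⟩
  let p : Set α → α → Prop := fun X b => b ∈ B \ X ∧ typeOver c X b = typeOver c X a
  let e : Ω → α := fixImage fun X => Classical.epsilon (p X)
  have he : ∀ ξ, p (e '' Iio ξ) (e ξ) := by
    intro ξ
    induction ξ using WellFoundedLT.induction with
    | ind ξ ih =>
      have hξB : e '' Iio ξ ⊆ B := by
        rintro _ ⟨η, hη, rfl⟩
        exact (ih η hη).1.1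
      rw [show e ξ = _ from fixImage_eq _ ξ]
      exact Classical.epsilon_spec
        (hB _ hξB (mk_image_le.trans (hΩ ξ)) a fun haξ => ha (hξB haξ))
  refine ⟨e, injective_of_forall_notMem_image_Iio fun ξ => (he ξ).1.2, fun σ ξ hσ => ?_⟩
  refine apply_insert_eq_of_typeOver_eq (he ξ).2 ?_
  rw [Finset.coe_image]
  exact image_mono hσ

theorem exists_injective_isEndHomogeneous (hκ : ℵ₀ ≤ κ) (hι : #ι ≤ 2 ^ κ) (hα : 2 ^ κ < #α)
    (hΩ : ∀ ξ : Ω, #(Iio ξ) ≤ κ) : ∃ e : Ω → α, Injective e ∧ ∃ d, IsEndHomogeneous c e d := by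
  obtain ⟨B, hB, hBclosed⟩ := exists_typeOver_closed c hκ hι
  obtain ⟨a, ha⟩ : ∃ a, a ∉ B := by
    by_contra! hBuniv
    rw [← mk_univ, ← eq_univ_of_forall hBuniv] at hα
    exact hα.not_ge hB
  obtain ⟨e, he, hd⟩ := exists_injective_isEndHomogeneous_of_closed c hΩ hBclosed ha
  exact ⟨e, he, _, hd⟩

end Homogeneous

/-- `PartitionRel κ ν n μ` is the arrow relation `κ → (ν)^n_μ`. -/
def PartitionRel (κ ν : Cardinal.{v}) (n : ℕ) (μ : Cardinal.{v}) : Prop :=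
  ∀ (α ι : Type v), #α = κ → #ι = μ →
    ∀ c : Finset α → ι, ∃ H : Set α, #H = ν ∧ IsHomogeneous c n H

variable {κ μ ν : Cardinal.{v}}

theorem partitionRel_succ_one (hμ : ℵ₀ ≤ μ) : PartitionRel (succ μ) (succ μ) 1 μ := by
  intro α ι hα hι c
  obtain ⟨i, hi⟩ := infinite_pigeonhole_card (fun a => c {a}) (succ μ) hα.ge
    (hμ.trans (le_succ μ)) (by rw [(isRegular_succ hμ).cof_ord, hι]; exact lt_succ μ)
  obtain ⟨H, hHi, hH⟩ := le_mk_iff_exists_subset.1 hi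
  refine ⟨H, hH, fun s t hs ht hsH htH => ?_⟩
  obtain ⟨x, rfl⟩ := Finset.card_eq_one.1 hs
  obtain ⟨y, rfl⟩ := Finset.card_eq_one.1 ht
  have hx : c {x} = i := hHi (hsH (Finset.mem_singleton_self x))
  have hy : c {y} = i := hHi (htH (Finset.mem_singleton_self y))
  rw [hx, hy]

theorem PartitionRel.two_power_succ {n : ℕ} (hκ : ℵ₀ ≤ κ) (hμ : μ ≤ 2 ^ κ)
    (h : PartitionRel (succ κ) ν n μ) : PartitionRel (succ (2 ^ κ)) ν (n + 1) μ := by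
  classical
  intro α ι hα hι c
  obtain ⟨e, he, d, hd⟩ := exists_injective_isEndHomogeneous (Ω := (succ κ).ord.ToType) c hκ
    (hι.trans_le hμ) (hα ▸ lt_succ _) mk_Iio_toType_ord_succ_le
  obtain ⟨H, hH, hHd⟩ := h _ ι (mk_ord_toType _) hι d
  exact ⟨e '' H, by rw [mk_image_eq he, hH], hd.isHomogeneous_image he hHd⟩

theorem le_iterBeth (μ : Cardinal) (r : ℕ) : μ ≤ iterBeth μ r := by
  induction r with
  | zero => exact le_rfl
  | succ r ih => exact ih.trans (cantor _).le

theorem partitionRel_succ_iterBeth (hμ : ℵ₀ ≤ μ) (r : ℕ) :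
    PartitionRel (succ (iterBeth μ r)) (succ μ) (r + 1) μ := by
  induction r with
  | zero => exact partitionRel_succ_one hμ
  | succ r ih =>
    exact ih.two_power_succ (hμ.trans (le_iterBeth μ r)) ((le_iterBeth μ r).trans (cantor _).le)

theorem erdos_rado.{u} (r : ℕ) (μ : Cardinal.{u}) (hμ : Cardinal.aleph0 ≤ μ)
    (α ι : Type u) (hα : Cardinal.mk α = Order.succ (iterBeth μ r))
    (hι : Cardinal.mk ι = μ) (c : Finset α → ι) :
    ∃ H : Set α, Cardinal.mk H = Order.succ μ ∧
      ∀ s t : Finset α, s.card = r + 1 → t.card = r + 1 →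
        ↑s ⊆ H → ↑t ⊆ H → c s = c t :=
  partitionRel_succ_iterBeth hμ r α ι hα hι c
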